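/- Let M be a 2-locally-optimal consecutive matching in E (in particular, no single edge can be added to M, and no edge of M can be exchanged for two new edges, while keeping a consecutive matching). Then for every consecutive matching O in E, the number of edges of O that overlap exactly one edge of M is at most |M|. -/

import Mathlib

/-- Two edges `(i,j)` and `(i',j')` of the bipartite graph overlap if
`|i - i'| ≤ 1` or `|j - j'| ≤ 1`. -/
def Overlap {n : ℕ} (e e' : Fin n × Fin n) : Prop :=
  ((e.1.val : ℤ) - e'.1.val).natAbs ≤ 1 ∨ ((e.2.val : ℤ) - e'.2.val).natAbs ≤ 1

instance {n : ℕ} (e e' : Fin n × Fin n) : Decidable (Overlap e e') := by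
  unfold Overlap; infer_instance

/-- `M` is a consecutive matching in `E`. -/
def ConsecMatching {n : ℕ} (E M : Finset (Fin n × Fin n)) : Prop :=
  M ⊆ E ∧
  (∀ e ∈ M, ∀ e' ∈ M, e ≠ e' → e.1 ≠ e'.1 ∧ e.2 ≠ e'.2) ∧
  (∀ e ∈ M, ∀ e' ∈ M, e'.1.val = e.1.val + 1 → e'.2.val = e.2.val + 1) ∧
  (∀ e ∈ M, ∀ e' ∈ M, e'.2.val = e.2.val + 1 → e'.1.val = e.1.val + 1)

/-- `s` is the run of `ℓ` consecutive edges at `(p, q)`,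
i.e. `s = {(p+r, q+r) : 0 ≤ r < ℓ}`. -/
def IsRunAt {n : ℕ} (s : Finset (Fin n × Fin n)) (p q ℓ : ℕ) : Prop :=
  p + ℓ ≤ n ∧ q + ℓ ≤ n ∧
  ∀ e : Fin n × Fin n, e ∈ s ↔ ∃ r < ℓ, e.1.val = p + r ∧ e.2.val = q + r

/-- `s` is a run of `ℓ` consecutive edges. -/
def IsRun {n : ℕ} (s : Finset (Fin n × Fin n)) (ℓ : ℕ) : Prop :=
  ∃ p q, IsRunAt s p q ℓ

/-- `E` contains no run of `k` consecutive edges. -/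
def NoRun {n : ℕ} (E : Finset (Fin n × Fin n)) (k : ℕ) : Prop :=
  ¬ ∃ s : Finset (Fin n × Fin n), IsRun s k ∧ s ⊆ E

/-- `s` is a streak of `M`: a run of (at least one) consecutive edges contained in `M`,
maximal under inclusion among runs contained in `M`. -/
def IsStreak {n : ℕ} (M s : Finset (Fin n × Fin n)) : Prop :=
  (∃ ℓ, 1 ≤ ℓ ∧ IsRun s ℓ) ∧ s ⊆ M ∧
  ∀ s' ℓ', IsRun s' ℓ' → s' ⊆ M → s ⊆ s' → s' = s

/-- `s 0, …, s (m-1)` is a greedy sequence in `E` with threshold `k`: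
each `s i` is a run of at least `k` consecutive edges, all of whose edges
overlap no edge of the previously chosen runs, and no run of consecutive
edges all still available at step `i` is longer than `s i`. -/
def GreedySeq {n : ℕ} (E : Finset (Fin n × Fin n)) (k m : ℕ)
    (s : ℕ → Finset (Fin n × Fin n)) : Prop :=
  ∀ i < m,
    s i ⊆ E.filter (fun e => ∀ j < i, ∀ e' ∈ s j, ¬ Overlap e e') ∧
    (∃ ℓ, k ≤ ℓ ∧ IsRun (s i) ℓ) ∧
    (∀ r ℓ, IsRun r ℓ →
      r ⊆ E.filter (fun e => ∀ j < i, ∀ e' ∈ s j, ¬ Overlap e e') →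
      ℓ ≤ (s i).card)

/-- `M` is a `t`-locally-optimal consecutive matching in `E`. -/
def LocallyOptimal {n : ℕ} (E M : Finset (Fin n × Fin n)) (t : ℕ) : Prop :=
  ConsecMatching E M ∧
  ¬ ∃ Erem Eadd : Finset (Fin n × Fin n), Erem ⊆ M ∧ Eadd ⊆ E \ M ∧
      Erem.card < Eadd.card ∧ Eadd.card ≤ t ∧
      ConsecMatching E ((M \ Erem) ∪ Eadd)

/-! Map each edge of `O` that overlaps exactly one edge `f` of `M` to `f`. This map is injective:
if two distinct edges `e, e'` of `O` both had `f` as their only overlapping edge in `M`, then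
`(M \ {f}) ∪ {e, e'}` would be a consecutive matching, and removing at most one edge of `M` while
adding `{e, e'} \ M` (at least one edge more) contradicts 2-local optimality. -/

section ConsecMatching

variable {n : ℕ} {E M : Finset (Fin n × Fin n)}

lemma Overlap.refl (e : Fin n × Fin n) : Overlap e e := by
  unfold Overlap; omega

lemma Overlap.symm {e e' : Fin n × Fin n} (h : Overlap e e') : Overlap e' e := by
  unfold Overlap at *; omega

lemma coords_ne_of_not_overlap {a b : Fin n × Fin n} (h : ¬ Overlap a b) :
    a.1 ≠ b.1 ∧ a.2 ≠ b.2 ∧ a.1.val ≠ b.1.val + 1 ∧ b.1.val ≠ a.1.val + 1 ∧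
      a.2.val ≠ b.2.val + 1 ∧ b.2.val ≠ a.2.val + 1 := by
  unfold Overlap at h
  refine ⟨fun h' => ?_, fun h' => ?_, ?_, ?_, ?_, ?_⟩
  · have := congrArg Fin.val h'; omega
  · have := congrArg Fin.val h'; omega
  all_goals omega

lemma ConsecMatching.subset {s : Finset (Fin n × Fin n)} (hM : ConsecMatching E M)
    (hs : s ⊆ M) : ConsecMatching E s :=
  ⟨hs.trans hM.1, fun e he e' he' => hM.2.1 e (hs he) e' (hs he'),
    fun e he e' he' => hM.2.2.1 e (hs he) e' (hs he'),
    fun e he e' he' => hM.2.2.2 e (hs he) e' (hs he')⟩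

lemma ConsecMatching.union {A B : Finset (Fin n × Fin n)} (hA : ConsecMatching E A)
    (hB : ConsecMatching E B) (hAB : ∀ a ∈ A, ∀ b ∈ B, ¬ Overlap a b) :
    ConsecMatching E (A ∪ B) := by
  obtain ⟨hAE, hA₁, hA₂, hA₃⟩ := hA
  obtain ⟨hBE, hB₁, hB₂, hB₃⟩ := hB
  refine ⟨Finset.union_subset hAE hBE, ?_, ?_, ?_⟩ <;>
  · intro x hx y hy
    rcases Finset.mem_union.mp hx with hx | hx <;> rcases Finset.mem_union.mp hy with hy | hy
    · first | exact hA₁ x hx y hy | exact hA₂ x hx y hy | exact hA₃ x hx y hy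
    · have := coords_ne_of_not_overlap (hAB x hx y hy)
      first | exact fun _ => ⟨this.1, this.2.1⟩ | omega
    · have := coords_ne_of_not_overlap (hAB y hy x hx)
      first | exact fun _ => ⟨this.1.symm, this.2.1.symm⟩ | omega
    · first | exact hB₁ x hx y hy | exact hB₂ x hx y hy | exact hB₃ x hx y hy

/-- Witnessed by the exchange removing `{f} \ T` from `M` and adding `T \ M`. -/
lemma LocallyOptimal.not_consecMatching_sdiff_union {f : Fin n × Fin n}
    {T : Finset (Fin n × Fin n)} (hM : LocallyOptimal E M 2) (hf : f ∈ M) (hTE : T ⊆ E)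
    (hT : T.card = 2) (hTM : ∀ x ∈ T, x ∈ M → x = f) :
    ¬ ConsecMatching E ((M \ {f}) ∪ T) := by
  intro hcons
  have hinter : (T ∩ M).card ≤ ({f} ∩ T).card :=
    Finset.card_le_card fun x hx => by
      obtain ⟨hxT, hxM⟩ := Finset.mem_inter.mp hx
      obtain rfl := hTM x hxT hxM
      exact Finset.mem_inter.mpr ⟨Finset.mem_singleton_self x, hxT⟩
  have hcard : ({f} \ T).card < (T \ M).card := by
    have hf := Finset.card_sdiff_add_card_inter {f} T
    have hT' := Finset.card_sdiff_add_card_inter T M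
    rw [Finset.card_singleton] at hf
    omega
  refine hM.2 ⟨{f} \ T, T \ M, ?_, Finset.sdiff_subset_sdiff hTE le_rfl, hcard,
    (Finset.card_le_card Finset.sdiff_subset).trans hT.le, ?_⟩
  · exact Finset.sdiff_subset.trans (Finset.singleton_subset_iff.mpr hf)
  · convert hcons using 1
    ext x
    simp only [Finset.mem_union, Finset.mem_sdiff, Finset.mem_singleton]
    tauto

lemma LocallyOptimal.eq_of_unique_overlap {O : Finset (Fin n × Fin n)} {f e e' : Fin n × Fin n}
    (hM : LocallyOptimal E M 2) (hO : ConsecMatching E O) (hf : f ∈ M) (he : e ∈ O)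
    (he' : e' ∈ O) (hef : ∀ g ∈ M, Overlap e g → g = f) (he'f : ∀ g ∈ M, Overlap e' g → g = f) :
    e = e' := by
  by_contra hne
  have hT : {e, e'} ⊆ O := Finset.insert_subset he (Finset.singleton_subset_iff.mpr he')
  refine hM.not_consecMatching_sdiff_union hf (hT.trans hO.1) (Finset.card_pair hne) ?_ ?_
  · intro x hx hxM
    rcases Finset.mem_insert.mp hx with rfl | hx
    · exact hef x hxM (Overlap.refl x)
    · obtain rfl := Finset.mem_singleton.mp hx
      exact he'f x hxM (Overlap.refl x)
  · refine (hM.1.subset Finset.sdiff_subset).union (hO.subset hT) ?_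
    intro g hg x hx hgx
    obtain ⟨hgM, hgf⟩ := Finset.mem_sdiff.mp hg
    refine hgf (Finset.mem_singleton.mpr ?_)
    rcases Finset.mem_insert.mp hx with rfl | hx
    · exact hef g hgM hgx.symm
    · obtain rfl := Finset.mem_singleton.mp hx
      exact he'f g hgM hgx.symm

end ConsecMatching

theorem singly_overlapping_bound_general {n : ℕ}
    (E M : Finset (Fin n × Fin n)) (hM : LocallyOptimal E M 2)
    (O : Finset (Fin n × Fin n)) (hO : ConsecMatching E O) :
    (O.filter (fun e => (M.filter (fun f => Overlap e f)).card = 1)).card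
      ≤ M.card := by
  have unique_of_mem_filter {e : Fin n × Fin n}
      (he : e ∈ O.filter (fun e => (M.filter (fun f => Overlap e f)).card = 1))
      {f : Fin n × Fin n} (hf : f ∈ M) (hef : Overlap e f) : ∀ g ∈ M, Overlap e g → g = f :=
    fun g hg heg => Finset.card_le_one.mp (Finset.mem_filter.mp he).2.le g
      (Finset.mem_filter.mpr ⟨hg, heg⟩) f (Finset.mem_filter.mpr ⟨hf, hef⟩)
  refine Finset.card_le_card_of_forall_subsingleton Overlap ?_ ?_
  · intro e he
    obtain ⟨f, hf⟩ := Finset.card_eq_one.mp (Finset.mem_filter.mp he).2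
    exact ⟨f, Finset.mem_filter.mp (hf ▸ Finset.mem_singleton_self f)⟩
  · intro f hf e ⟨he, hef⟩ e' ⟨he', he'f⟩
    exact hM.eq_of_unique_overlap hO hf (Finset.mem_filter.mp he).1 (Finset.mem_filter.mp he').1
      (unique_of_mem_filter he hf hef) (unique_of_mem_filter he' hf he'f)

/-- for a 2-locally-optimal consecutive matching `M` in `E` and any
consecutive matching `O` in `E`, the number of edges of `O` that overlap exactly
one edge of `M` is at most `|M|`. -/
theorem singly_overlapping_bound {n : ℕ} (hn : 1 ≤ n)
    (E M : Finset (Fin n × Fin n)) (hM : LocallyOptimal E M 2)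
    (O : Finset (Fin n × Fin n)) (hO : ConsecMatching E O) :
    (O.filter (fun e => (M.filter (fun f => Overlap e f)).card = 1)).card
      ≤ M.card :=
  singly_overlapping_bound_general E M hM O hO
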